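/- arXiv:math/0204060 — 4 statements merged into one kernel-verified Lean document; each statement's English description precedes it below -/
import Mathlib

section
/- Let H be a Hilbert space, F a finite-dimensional subspace, and t ↦ T(t) ∈ L(H,H) a C^k curve of operators (k ≥ 1) such that every T(t) has rank N = dim F and T(0)(H) = F with T(0)T(0)(H) = T(0)(H). Then t ↦ Trace(T(t)) is C^k in a neighborhood of 0. -/
/-!
Let `P` be the orthogonal projection onto `F` and compress `T(t)` to `Q(t) = P T(t)|_F`. Since
`T(0)` maps `F` onto `F`, `Q(0)` is invertible, hence so is `Q(t)` for small `t`. Then `T(t)` is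
injective on `F`, so by the rank condition `T(t)(F) = T(t)(H)`, which gives the factorization
`T(t) = T(t)|_F Q(t)⁻¹ P T(t)`. Cycling the trace, `Trace T(t) = Trace (P T(t)² |_F Q(t)⁻¹)`,
a trace on the fixed finite-dimensional space `F` of a `C^k` function of `t`.
-/

section Algebra

open Module LinearMap

variable {K E M : Type*} [Field K] [AddCommGroup E] [Module K E] [AddCommGroup M] [Module K M]

theorem LinearMap.trace_restrict_eq_trace_comp {V : Type*} [AddCommGroup V] [Module K V]
    [FiniteDimensional K V] (f : E →ₗ[K] E) (G : Submodule K E) [FiniteDimensional K G]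
    (hG : ∀ x, f x ∈ G) (p : E →ₗ[K] V) (s : V →ₗ[K] E) (hs : ∀ v, s v ∈ G)
    (hf : ∀ x, f x = s (p x)) :
    trace K G (f.restrict fun x _ => hG x) = trace K V (p ∘ₗ s) := by
  have hfactor : f.restrict (fun x _ => hG x) = s.codRestrict G hs ∘ₗ p ∘ₗ G.subtype := by
    ext x
    exact hf x
  rw [hfactor, trace_comp_comm']
  rfl

theorem Submodule.map_eq_range_of_injective_comp_subtype (f : E →ₗ[K] M) (F : Submodule K E)
    [FiniteDimensional K (range f)] (hinj : Function.Injective (f ∘ₗ F.subtype))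
    (hrank : finrank K (range f) = finrank K F) :
    F.map f = range f := by
  apply Submodule.eq_of_le_of_finrank_eq map_le_range
  rw [← Submodule.range_subtype F, ← range_comp, finrank_range_of_inj hinj, hrank]

theorem LinearMap.apply_leftInverse_compress_apply (f : E →ₗ[K] M) (F : Submodule K E)
    [FiniteDimensional K (range f)] (hrank : finrank K (range f) = finrank K F)
    (P : M →ₗ[K] F) (R : F →ₗ[K] F) (hR : ∀ z : F, R (P (f z)) = z) (x : E) :
    f (R (P (f x))) = f x := by
  have hinj : Function.Injective (f ∘ₗ F.subtype) :=
    Function.LeftInverse.injective (g := R ∘ P) hR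
  obtain ⟨z, hzF, hzx⟩ : f x ∈ F.map f := by
    rw [Submodule.map_eq_range_of_injective_comp_subtype f F hinj hrank]
    exact mem_range_self f x
  rw [← hzx]
  exact congrArg f (congrArg Subtype.val (hR ⟨z, hzF⟩))

theorem LinearMap.trace_restrict_eq_trace_compress (f : E →ₗ[K] E) (F : Submodule K E)
    [FiniteDimensional K F] (hrank : finrank K (range f) = finrank K F)
    (G : Submodule K E) [FiniteDimensional K G] (hG : ∀ x, f x ∈ G)
    (P : E →ₗ[K] F) (R : F →ₗ[K] F) (hR : ∀ z : F, R (P (f z)) = z) :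
    trace K G (f.restrict fun x _ => hG x) = trace K F (P ∘ₗ f ∘ₗ f ∘ₗ F.subtype ∘ₗ R) := by
  have : FiniteDimensional K (range f) :=
    Submodule.finiteDimensional_of_le (by rintro _ ⟨x, rfl⟩; exact hG x)
  exact trace_restrict_eq_trace_comp f G hG (P ∘ₗ f) (f ∘ₗ F.subtype ∘ₗ R) (fun _ => hG _)
    fun x => (apply_leftInverse_compress_apply f F hrank P R hR x).symm

end Algebra

section Analysis

open LinearMap

variable {𝕜 E : Type*} [NontriviallyNormedField 𝕜] [CompleteSpace 𝕜]
  [NormedAddCommGroup E] [NormedSpace 𝕜 E]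

theorem ContinuousLinearMap.isUnit_compress_of_map_eq (F : Submodule 𝕜 E)
    [FiniteDimensional 𝕜 F] (P : E →L[𝕜] F) (hP : ∀ z : F, P z = z) (f : E →L[𝕜] E)
    (hf : F.map (f : E →ₗ[𝕜] E) = F) : IsUnit (P ∘L f ∘L F.subtypeL) := by
  have : CompleteSpace F := FiniteDimensional.complete 𝕜 F
  have hsurj : Function.Surjective (P ∘L f ∘L F.subtypeL) := by
    intro y
    obtain ⟨x, hxF, hxy⟩ : (y : E) ∈ F.map (f : E →ₗ[𝕜] E) := by rw [hf]; exact y.2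
    exact ⟨⟨x, hxF⟩, (congrArg P hxy).trans (hP y)⟩
  exact isUnit_iff_bijective.mpr
    ⟨LinearMap.injective_iff_surjective (f := (P ∘L f ∘L F.subtypeL : F →ₗ[𝕜] F)).mpr hsurj,
      hsurj⟩

theorem ContDiffAt.trace_comp_ringInverse {V : Type*} [NormedAddCommGroup V] [NormedSpace 𝕜 V]
    [FiniteDimensional 𝕜 V] {n : WithTop ℕ∞} {A Q : E → V →L[𝕜] V} {x : E}
    (hA : ContDiffAt 𝕜 n A x) (hQ : ContDiffAt 𝕜 n Q x) (hQx : IsUnit (Q x)) :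
    ContDiffAt 𝕜 n (fun y => trace 𝕜 V ((A y ∘L Ring.inverse (Q y) : V →L[𝕜] V) : V →ₗ[𝕜] V))
      x := by
  have : CompleteSpace V := FiniteDimensional.complete 𝕜 V
  let traceCLM : (V →L[𝕜] V) →L[𝕜] 𝕜 :=
    LinearMap.toContinuousLinearMap (trace 𝕜 V ∘ₗ ContinuousLinearMap.coeLM 𝕜)
  have hinv : ContDiffAt 𝕜 n Ring.inverse (Q x) := hQx.unit_spec ▸ contDiffAt_ringInverse 𝕜 _
  exact traceCLM.contDiff.contDiffAt.comp x (hA.clm_comp (hinv.comp x hQ))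

end Analysis

theorem trace_of_Ck_finite_rank_curve_general
    {H : Type*} [NormedAddCommGroup H] [InnerProductSpace ℝ H]
    (k : ℕ) (N : ℕ)
    (T : ℝ → H →L[ℝ] H) (hT : ContDiff ℝ k T)
    (F : Submodule ℝ H) [FiniteDimensional ℝ F]
    (hF : Module.finrank ℝ F = N)
    (hrank : ∀ t, Module.finrank ℝ (LinearMap.range ((T t : H →ₗ[ℝ] H))) = N)
    (hT0F : Submodule.map ((T 0 : H →ₗ[ℝ] H)) F = F) :
    ∃ ε > 0, ∃ τ : ℝ → ℝ,
      ContDiffOn ℝ k τ (Metric.ball (0 : ℝ) ε) ∧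
      ∀ t ∈ Metric.ball (0 : ℝ) ε,
        ∀ (G : Submodule ℝ H) (_ : FiniteDimensional ℝ G) (hG : ∀ x, T t x ∈ G),
          τ t = LinearMap.trace ℝ G
            (((T t : H →ₗ[ℝ] H)).restrict (fun x _ => hG x)) := by
  let P : H →L[ℝ] F := F.orthogonalProjectionOnto
  let Q : ℝ → F →L[ℝ] F := fun t => P ∘L T t ∘L F.subtypeL
  let A : ℝ → F →L[ℝ] F := fun t => P ∘L T t ∘L T t ∘L F.subtypeL
  have hQ : ContDiff ℝ k Q := contDiff_const.clm_comp (hT.clm_comp contDiff_const)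
  have hA : ContDiff ℝ k A :=
    contDiff_const.clm_comp (hT.clm_comp (hT.clm_comp contDiff_const))
  have hQ0 : IsUnit (Q 0) := ContinuousLinearMap.isUnit_compress_of_map_eq F P
    F.orthogonalProjectionOnto_mem_subspace_eq_self (T 0) hT0F
  obtain ⟨u, hu, hτ⟩ :=
    (hA.contDiffAt.trace_comp_ringInverse hQ.contDiffAt hQ0).contDiffOn le_rfl (by simp)
  have hQunit : ∀ᶠ t in nhds 0, IsUnit (Q t) :=
    hQ.continuous.continuousAt.eventually ((Units.isOpen (R := F →L[ℝ] F)).eventually_mem hQ0)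
  obtain ⟨ε, hε, hball⟩ := Metric.mem_nhds_iff.mp (Filter.inter_mem hu hQunit)
  refine ⟨ε, hε, _, hτ.mono fun t ht => (hball ht).1, fun t ht G _ hG => ?_⟩
  have hR (z : F) : Ring.inverse (Q t) (Q t z) = z :=
    ContinuousLinearMap.ext_iff.mp (Ring.inverse_mul_cancel _ (hball ht).2) z
  rw [LinearMap.trace_restrict_eq_trace_compress _ F (by rw [hrank, hF]) G hG P _ hR]
  rfl

/-- If `t ↦ T(t)` is a `C^k` curve of rank-`N` operators on a Hilbert space with
`T(0)(H) = F` finite dimensional and `T(0)T(0)(H) = T(0)(H)`, then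
`t ↦ Trace(T(t))` is `C^k` near `0`. -/
theorem trace_of_Ck_finite_rank_curve
    {H : Type*} [NormedAddCommGroup H] [InnerProductSpace ℝ H] [CompleteSpace H]
    (k : ℕ) (hk : 1 ≤ k) (N : ℕ)
    (T : ℝ → H →L[ℝ] H) (hT : ContDiff ℝ k T)
    (F : Submodule ℝ H) [FiniteDimensional ℝ F]
    (hF : Module.finrank ℝ F = N)
    (hrank : ∀ t, Module.finrank ℝ (LinearMap.range ((T t : H →ₗ[ℝ] H))) = N)
    (hrange0 : LinearMap.range ((T 0 : H →ₗ[ℝ] H)) = F)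
    (hT0F : Submodule.map ((T 0 : H →ₗ[ℝ] H)) F = F) :
    ∃ ε > 0, ∃ τ : ℝ → ℝ,
      ContDiffOn ℝ k τ (Metric.ball (0 : ℝ) ε) ∧
      ∀ t ∈ Metric.ball (0 : ℝ) ε,
        ∀ (G : Submodule ℝ H) (_ : FiniteDimensional ℝ G) (hG : ∀ x, T t x ∈ G),
          τ t = LinearMap.trace ℝ G
            (((T t : H →ₗ[ℝ] H)).restrict (fun x _ => hG x)) :=
  trace_of_Ck_finite_rank_curve_general k N T hT F hF hrank hT0F
end

section
/- If P and Q are idempotent bounded operators on a Hilbert space with ‖P − Q‖ < 1 and P has finite rank N, then Q has rank N. -/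
/-!
If `P x = x` and `Q x = 0`, then `‖x‖ = ‖(P - Q) x‖ ≤ ‖P - Q‖ ‖x‖`, which forces `x = 0` when
`‖P - Q‖ < 1`. So `Q` is injective on the range of `P` and, symmetrically, `P` on the range of `Q`;
the two ranges therefore have the same dimension, finite or not.
-/

namespace ContinuousLinearMap

variable {𝕜 E : Type*} [NontriviallyNormedField 𝕜] [NormedAddCommGroup E] [NormedSpace 𝕜 E]
  {P Q : E →L[𝕜] E}

theorem eq_zero_of_norm_sub_lt_one (hnear : ‖P - Q‖ < 1) {x : E} (hPx : P x = x)
    (hQx : Q x = 0) : x = 0 := by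
  by_contra hx
  have hpos : 0 < ‖x‖ := norm_pos_iff.mpr hx
  have hle : ‖x‖ ≤ ‖P - Q‖ * ‖x‖ := by simpa [hPx, hQx] using (P - Q).le_opNorm x
  nlinarith

theorem injective_domRestrict_range_of_norm_sub_lt_one (hP : IsIdempotentElem P)
    (hnear : ‖P - Q‖ < 1) :
    Function.Injective ((Q : E →ₗ[𝕜] E).domRestrict (LinearMap.range (P : E →ₗ[𝕜] E))) := by
  refine (injective_iff_map_eq_zero _).mpr fun ⟨x, hx⟩ hQx ↦ Subtype.ext ?_
  have hPx : P x = x :=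
    (LinearMap.IsIdempotentElem.mem_range_iff (IsIdempotentElem.toLinearMap hP)).mp hx
  exact eq_zero_of_norm_sub_lt_one hnear hPx hQx

theorem rank_range_le_of_norm_sub_lt_one (hP : IsIdempotentElem P) (hnear : ‖P - Q‖ < 1) :
    Module.rank 𝕜 (LinearMap.range (P : E →ₗ[𝕜] E)) ≤
      Module.rank 𝕜 (LinearMap.range (Q : E →ₗ[𝕜] E)) :=
  calc Module.rank 𝕜 (LinearMap.range (P : E →ₗ[𝕜] E))
      = Module.rank 𝕜 (LinearMap.range ((Q : E →ₗ[𝕜] E).domRestrict _)) :=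
        (rank_range_of_injective _
          (injective_domRestrict_range_of_norm_sub_lt_one hP hnear)).symm
    _ ≤ Module.rank 𝕜 (LinearMap.range (Q : E →ₗ[𝕜] E)) :=
        Submodule.rank_mono (LinearMap.range_domRestrict_le_range _ _)

theorem rank_range_eq_of_norm_sub_lt_one (hP : IsIdempotentElem P) (hQ : IsIdempotentElem Q)
    (hnear : ‖P - Q‖ < 1) :
    Module.rank 𝕜 (LinearMap.range (P : E →ₗ[𝕜] E)) =
      Module.rank 𝕜 (LinearMap.range (Q : E →ₗ[𝕜] E)) :=
  le_antisymm (rank_range_le_of_norm_sub_lt_one hP hnear)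
    (rank_range_le_of_norm_sub_lt_one hQ (by rwa [norm_sub_rev]))

end ContinuousLinearMap

theorem rank_eq_of_idempotent_near_general
    {H : Type*} [NormedAddCommGroup H] [InnerProductSpace ℝ H]
    (P Q : H →L[ℝ] H)
    (hP : P.comp P = P) (hQ : Q.comp Q = Q)
    (hnear : ‖P - Q‖ < 1) (N : ℕ)
    (hPfin : FiniteDimensional ℝ (LinearMap.range ((P : H →ₗ[ℝ] H))))
    (hPrank : Module.finrank ℝ (LinearMap.range ((P : H →ₗ[ℝ] H))) = N) :
    FiniteDimensional ℝ (LinearMap.range ((Q : H →ₗ[ℝ] H))) ∧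
      Module.finrank ℝ (LinearMap.range ((Q : H →ₗ[ℝ] H))) = N := by
  have hrank := ContinuousLinearMap.rank_range_eq_of_norm_sub_lt_one hP hQ hnear
  refine ⟨?_, ?_⟩
  · rw [FiniteDimensional, ← Module.rank_lt_aleph0_iff, ← hrank]
    exact Module.rank_lt_aleph0 ℝ _
  · exact Module.finrank_eq_of_rank_eq (by rw [← hrank, ← hPrank, Module.finrank_eq_rank])

/-- If `P`, `Q` are idempotent bounded operators on a Hilbert space with
`‖P − Q‖ < 1` and `P` has finite rank `N`, then `Q` has rank `N`. -/
theorem rank_eq_of_idempotent_near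
    {H : Type*} [NormedAddCommGroup H] [InnerProductSpace ℝ H] [CompleteSpace H]
    (P Q : H →L[ℝ] H)
    (hP : P.comp P = P) (hQ : Q.comp Q = Q)
    (hnear : ‖P - Q‖ < 1) (N : ℕ)
    (hPfin : FiniteDimensional ℝ (LinearMap.range ((P : H →ₗ[ℝ] H))))
    (hPrank : Module.finrank ℝ (LinearMap.range ((P : H →ₗ[ℝ] H))) = N) :
    FiniteDimensional ℝ (LinearMap.range ((Q : H →ₗ[ℝ] H))) ∧
      Module.finrank ℝ (LinearMap.range ((Q : H →ₗ[ℝ] H))) = N :=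
  rank_eq_of_idempotent_near_general P Q hP hQ hnear N hPfin hPrank
end

section
/- Let s_n = 2^{n−n²} and define λ_n(t) = 2^{−n²}√(1 + (t/s_n)²). Then for every α > 0, the sequence (λ_n'(s_n) − λ_n'(0))/s_n^α = 2^{n(α(n−1)−1)}/√2 tends to infinity as n → ∞. -/
/-! At `t = s_n` the factor `√(1 + (t/s_n)²)` is `√2` and `λ_n'(0) = 0`, so the quotient is a
power of `2` with exponent `(n² - 2n) + (1 - α)(n - n²) = n(α(n - 1) - 1)`, which is quadratic
in `n` with leading coefficient `α > 0`. -/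

open Filter

lemma zpow_mul_zpow_div_zpow_rpow {b : ℝ} (hb : 0 < b) (a c : ℤ) (α : ℝ) :
    b ^ a * b ^ c / (b ^ c) ^ α = b ^ ((a : ℝ) + (1 - α) * c) := by
  simp only [← Real.rpow_intCast, ← Real.rpow_mul hb.le, ← Real.rpow_add hb,
    ← Real.rpow_sub hb]
  ring_nf

lemma tendsto_mul_mul_sub_one_sub_one_atTop {α : ℝ} (hα : 0 < α) :
    Tendsto (fun x : ℝ => x * (α * (x - 1) - 1)) atTop atTop := by
  have hlin : Tendsto (fun x : ℝ => α * (x - 1) - 1) atTop atTop :=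
    (tendsto_atTop_add_const_right atTop (-(α + 1)) (tendsto_id.const_mul_atTop hα)).congr
      fun x => by simp only [id]; ring
  exact tendsto_id.atTop_mul_atTop₀ hlin

/-- With `s_n = 2^{n-n²}` and `λ_n'(t) = 2^{n²-2n} t / √(1 + (t/s_n)²)`, for every
`α > 0` the difference quotient `(λ_n'(s_n) − λ_n'(0))/s_n^α` equals
`2^{n(α(n-1)-1)}/√2` and tends to infinity as `n → ∞`. -/
theorem example_not_C1alpha (α : ℝ) (hα : 0 < α) :
    let s : ℕ → ℝ := fun n => (2:ℝ) ^ ((n:ℤ) - (n:ℤ)^2)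
    let lam' : ℕ → ℝ → ℝ := fun n t =>
      (2:ℝ) ^ ((n:ℤ)^2 - 2*(n:ℤ)) * t / Real.sqrt (1 + (t / s n)^2)
    let q : ℕ → ℝ := fun n => (lam' n (s n) - lam' n 0) / (s n) ^ α
    (∀ n : ℕ, q n = (2:ℝ) ^ ((n:ℝ) * (α * ((n:ℝ) - 1) - 1)) / Real.sqrt 2) ∧
      Filter.Tendsto q Filter.atTop Filter.atTop := by
  intro s lam' q
  have hq (n : ℕ) : q n = (2:ℝ) ^ ((n:ℝ) * (α * ((n:ℝ) - 1) - 1)) / Real.sqrt 2 := by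
    have hs : s n ≠ 0 := by positivity
    simp only [q, lam', div_self hs, s, mul_zero, zero_div, sub_zero, one_pow]
    norm_num only
    rw [div_right_comm, zpow_mul_zpow_div_zpow_rpow two_pos]
    congr 2
    push_cast
    ring
  have hexp := (tendsto_mul_mul_sub_one_sub_one_atTop hα).comp tendsto_natCast_atTop_atTop
  exact ⟨hq, (((tendsto_rpow_atTop_of_base_gt_one 2 one_lt_two).comp hexp).atTop_div_const
    (by positivity)).congr fun n => (hq n).symm⟩
end

section
/- Let λ₁ : ℝ → ℝ be smooth, nonnegative, with compact support and λ₁'(0) = 0. Define the diagonal operator B(t) on ℓ² by B(t)e_n = (1 + (1/n)λ₁(nt))e_n. Then for every x, y ∈ ℓ², the function t ↦ ⟨B(t)x, y⟩ is C¹ with derivative ⟨B₁(t)x, y⟩, where B₁(t)e_n = λ₁'(nt)e_n. -/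
/-- For the diagonal operators `B(t) eₙ = (1 + (1/n) λ₁(n t)) eₙ` on `ℓ²` (indexed by
`n ≥ 1`), the function `t ↦ ⟨B(t)x, y⟩` is `C¹` for all `x, y ∈ ℓ²`, with derivative
`⟨B₁(t)x, y⟩` where `B₁(t) eₙ = λ₁'(n t) eₙ`. -/
theorem diagonal_operator_weakly_C1
    (lam₁ : ℝ → ℝ) (hsmooth : ContDiff ℝ (⊤ : ℕ∞) lam₁) (hpos : ∀ t, 0 ≤ lam₁ t)
    (hsupp : HasCompactSupport lam₁) (hderiv0 : deriv lam₁ 0 = 0)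
    (x y : lp (fun _ : ℕ => ℝ) 2) :
    (∀ t : ℝ, HasDerivAt
        (fun u : ℝ => ∑' n : ℕ, (1 + (1 / ((n:ℝ) + 1)) * lam₁ (((n:ℝ) + 1) * u)) * x n * y n)
        (∑' n : ℕ, deriv lam₁ (((n:ℝ) + 1) * t) * x n * y n) t) ∧
      Continuous (fun t : ℝ => ∑' n : ℕ, deriv lam₁ (((n:ℝ) + 1) * t) * x n * y n) := by
  -- summability of x n * y n
  have hxy : Summable (fun n : ℕ => x n * y n) := by
    have := lp.summable_inner (𝕜 := ℝ) x y
    simpa [RCLike.inner_apply, mul_comm] using this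
  have hxyabs : Summable (fun n : ℕ => |x n * y n|) := by
    simpa using hxy.abs
  -- bound on derivative of lam₁
  have hcont : Continuous lam₁ := hsmooth.continuous
  have hdc : Continuous (deriv lam₁) := hsmooth.continuous_deriv (by simp)
  have hds : HasCompactSupport (deriv lam₁) := hsupp.deriv
  obtain ⟨C, hC⟩ := hds.exists_bound_of_continuous hdc
  obtain ⟨C₁, hC₁⟩ := hsupp.exists_bound_of_continuous hcont
  have hCpos : 0 ≤ C := le_trans (norm_nonneg _) (hC 0)
  -- dominating series
  have hu : Summable (fun n : ℕ => C * |x n * y n|) := hxyabs.mul_left C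
  -- termwise derivatives
  have hderiv : ∀ (n : ℕ) (u : ℝ),
      HasDerivAt (fun u : ℝ => (1 + (1 / ((n:ℝ) + 1)) * lam₁ (((n:ℝ) + 1) * u)) * x n * y n)
        (deriv lam₁ (((n:ℝ) + 1) * u) * x n * y n) u := by
    intro n u
    have hn : ((n : ℝ) + 1) ≠ 0 := by positivity
    have h1 : HasDerivAt (fun u : ℝ => lam₁ (((n:ℝ) + 1) * u))
        (deriv lam₁ (((n:ℝ) + 1) * u) * ((n:ℝ) + 1)) u := by
      have := ((hsmooth.differentiable (by simp)).differentiableAt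
        (x := ((n:ℝ) + 1) * u)).hasDerivAt
      have hc : HasDerivAt (fun u : ℝ => ((n:ℝ) + 1) * u) ((n:ℝ) + 1) u := by
        simpa using (hasDerivAt_id u).const_mul ((n:ℝ) + 1)
      exact this.comp u hc
    have h2 := ((h1.const_mul (1 / ((n:ℝ) + 1))).const_add 1).mul_const (x n)
    have h3 := h2.mul_const (y n)
    exact h3.congr_deriv (by rw [one_div_mul_eq_div, mul_div_assoc, div_self hn, mul_one])
  have hbound : ∀ (n : ℕ) (u : ℝ),
      ‖deriv lam₁ (((n:ℝ) + 1) * u) * x n * y n‖ ≤ C * |x n * y n| := by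
    intro n u
    rw [mul_assoc]
    rw [Real.norm_eq_abs, abs_mul]
    exact mul_le_mul_of_nonneg_right (hC _) (abs_nonneg _)
  -- summability at 0
  have h0 : Summable (fun n : ℕ =>
      (1 + (1 / ((n:ℝ) + 1)) * lam₁ (((n:ℝ) + 1) * (0:ℝ))) * x n * y n) := by
    apply Summable.of_norm
    apply Summable.of_nonneg_of_le (fun n => norm_nonneg _)
      (fun n => ?_) (hxyabs.mul_left (1 + C₁))
    have hn1 : (1:ℝ) ≤ (n:ℝ) + 1 := by simp [Nat.cast_nonneg]
    rw [mul_assoc, Real.norm_eq_abs, abs_mul]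
    apply mul_le_mul_of_nonneg_right _ (abs_nonneg _)
    have h1 : |(1 : ℝ) + (1 / ((n:ℝ) + 1)) * lam₁ (((n:ℝ) + 1) * 0)| ≤
        1 + |(1 / ((n:ℝ) + 1)) * lam₁ (((n:ℝ) + 1) * 0)| := by
      simpa using abs_add_le 1 ((1 / ((n:ℝ) + 1)) * lam₁ (((n:ℝ) + 1) * 0))
    refine h1.trans ?_
    gcongr
    rw [abs_mul]
    calc |1 / ((n:ℝ) + 1)| * |lam₁ (((n:ℝ) + 1) * 0)| ≤ 1 * C₁ := by
          apply mul_le_mul _ _ (abs_nonneg _) zero_le_one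
          · rw [abs_of_nonneg (by positivity)]
            rw [div_le_one (by positivity)]; exact hn1
          · simpa [Real.norm_eq_abs] using hC₁ (((n:ℝ) + 1) * 0)
      _ = C₁ := one_mul _
  constructor
  · intro t
    exact hasDerivAt_tsum hu hderiv hbound h0 t
  · exact continuous_tsum
      (fun n => ((hdc.comp (continuous_const.mul continuous_id)).mul continuous_const).mul
        continuous_const) hu (fun n u => hbound n u)
end
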